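/- arXiv:1111.0381 — 5 statements merged into one kernel-verified Lean document; each statement's English description precedes it below -/
import Mathlib

section
/- With the notation of the previous item, for all a, b ∈ A one has ⟨U(a), q(b)⟩ = a*·L(b). Consequently ‖L(b)‖ ≤ ‖q(b)‖_{M_L} for all b ∈ A, so there is a well-defined bounded linear map T : M_L → A with T(q(b)) = L(b), and U is adjointable with adjoint T. -/
/-!
Write `c := L b`. The transfer identity `L (α a * b) = a * L b` together with `L 1 = 1` gives
`L ((b - α c)* (b - α c)) = L (b* b) - c* c`, so positivity of `L` yields the Kadison–Schwarz type
inequality `c* c ≤ L (b* b)`, i.e. `‖L b‖ ≤ ‖q b‖`. Hence `L` factors through a bounded map `T` on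
the completion `M`, and the identity `⟪U a, q b⟫ = a* L b` extends from the dense range of `q` to
`⟪U a, m⟫ = a* T m`.
-/

open scoped ComplexStarModule

lemma LinearMap.map_star_of_map_isSelfAdjoint {A B : Type*} [AddCommGroup A] [Module ℂ A]
    [StarAddMonoid A] [StarModule ℂ A] [AddCommGroup B] [Module ℂ B] [StarAddMonoid B]
    [StarModule ℂ B] (f : A →ₗ[ℂ] B) (hf : ∀ a, IsSelfAdjoint a → IsSelfAdjoint (f a))
    (a : A) : f (star a) = star (f a) := by
  have hre := (hf _ (ℜ a).property).star_eq
  have him := (hf _ (ℑ a).property).star_eq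
  conv_lhs => rw [← realPart_add_I_smul_imaginaryPart a]
  conv_rhs => rw [← realPart_add_I_smul_imaginaryPart a]
  simp [star_smul, hre, him, (ℜ a).property.star_eq, (ℑ a).property.star_eq]

lemma PositiveLinearMap.map_star {A B : Type*} [AddCommGroup A] [PartialOrder A]
    [StarAddMonoid A] [SelfAdjointDecompose A] [Module ℂ A] [StarModule ℂ A]
    [NonUnitalRing B] [PartialOrder B] [StarRing B] [StarOrderedRing B] [Module ℂ B]
    [StarModule ℂ B] (f : A →ₚ[ℂ] B) (a : A) : f (star a) = star (f a) :=
  (f : A →ₗ[ℂ] B).map_star_of_map_isSelfAdjoint (fun _ ha ↦ ha.map' f) a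

lemma map_nonneg_of_map_star_mul_self {A B : Type*} [NonUnitalCStarAlgebra A] [PartialOrder A]
    [StarOrderedRing A] [NonUnitalRing B] [PartialOrder B] [StarRing B] [StarOrderedRing B]
    {L : A → B} (hL : ∀ a : A, (∃ x, a = star x * x) → ∃ y, L a = star y * y) {a : A}
    (ha : 0 ≤ a) : 0 ≤ L a := by
  obtain ⟨y, hy⟩ := hL a (CStarAlgebra.nonneg_iff_eq_star_mul_self.mp ha)
  exact hy ▸ star_mul_self_nonneg y

section TransferOperator

variable {A F : Type*} [CStarAlgebra A] [PartialOrder A] [StarOrderedRing A]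
  [FunLike F A A] [MulHomClass F A A] [StarHomClass F A A]
  {L : A →ₚ[ℂ] A} {α : F}

lemma star_map_mul_map_le_map_star_mul_self_of_transfer
    (htransfer : ∀ a b : A, L (α a * b) = a * L b) (hL1 : L 1 = 1) (b : A) :
    star (L b) * L b ≤ L (star b * b) := by
  set c := L b
  have hcb : L (star (α c) * b) = star c * c := by rw [← map_star, htransfer]
  have hbc : L (star b * α c) = star c * c := by
    rw [← star_star (star b * _), star_mul, star_star, L.map_star, hcb, star_mul, star_star]
  have hcc : L (star (α c) * α c) = star c * c := by
    rw [← map_star, ← map_mul, ← mul_one (α _), htransfer, hL1, mul_one]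
  have hexpand : L (star (b - α c) * (b - α c)) = L (star b * b) - star c * c := by
    rw [star_sub, sub_mul, mul_sub, mul_sub, map_sub, map_sub, map_sub, hcb, hbc, hcc]
    abel
  rw [← sub_nonneg, ← hexpand]
  exact L.map_nonneg (star_mul_self_nonneg _)

lemma norm_map_sq_le_of_transfer (htransfer : ∀ a b : A, L (α a * b) = a * L b)
    (hL1 : L 1 = 1) (b : A) : ‖L b‖ ^ 2 ≤ ‖L (star b * b)‖ := by
  rw [sq, ← CStarRing.norm_star_mul_self]
  exact CStarAlgebra.norm_le_norm_of_nonneg_of_le (star_mul_self_nonneg _)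
    (star_map_mul_map_le_map_star_mul_self_of_transfer htransfer hL1 b)

end TransferOperator

/-- For an Exel system `(A, α, L)` with `A` unital, and `M_L` the Hilbert module
(abstracted as a normed space `M` with `A`-valued inner product, dense canonical map
`q : A → M` with `⟪q a, q b⟫ = L (a* b)` and `‖q a‖² = ‖L (a* a)‖`), the map
`U : a ↦ q (α a)` satisfies `⟪U a, q b⟫ = a* · L b`; consequently `‖L b‖ ≤ ‖q b‖`,
there is a bounded linear `T : M → A` with `T (q b) = L b`, and `U` is adjointable
with adjoint `T` (i.e. `⟪U a, m⟫ = a* · T m` for all `a, m`). -/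
theorem stmt2 {A : Type*} [CStarAlgebra A] {M : Type*}
    [NormedAddCommGroup M] [NormedSpace ℂ M]
    (inner : M → M → A) (q : A →ₗ[ℂ] M)
    (α : A →⋆ₐ[ℂ] A) (L : A →ₗ[ℂ] A)
    (hLpos : ∀ a : A, (∃ x, a = star x * x) → ∃ y, L a = star y * y)
    (htransfer : ∀ a b : A, L (α a * b) = a * L b)
    (hL1 : L 1 = 1)
    (hinner : ∀ a b : A, inner (q a) (q b) = L (star a * b))
    (hnorm : ∀ a : A, ‖q a‖ ^ 2 = ‖L (star a * a)‖)
    (hdense : DenseRange q)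
    (hinner_cont : ∀ a : A, Continuous fun m : M => inner (q a) m) :
    (∀ a b : A, inner (q (α a)) (q b) = star a * L b) ∧
    (∀ b : A, ‖L b‖ ≤ ‖q b‖) ∧
    (∃ T : M →L[ℂ] A, (∀ b : A, T (q b) = L b) ∧
      ∀ (a : A) (m : M), inner (q (α a)) m = star a * T m) := by
  let _ := CStarAlgebra.spectralOrder A
  have := CStarAlgebra.spectralOrderedRing A
  let Lₚ : A →ₚ[ℂ] A := .mk₀ L fun _ ↦ map_nonneg_of_map_star_mul_self hLpos
  have hU (a b : A) : inner (q (α a)) (q b) = star a * L b := by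
    rw [hinner, ← map_star, htransfer]
  have hbound (b : A) : ‖L b‖ ≤ ‖q b‖ := by
    refine (pow_le_pow_iff_left₀ (norm_nonneg _) (norm_nonneg _) two_ne_zero).mp ?_
    rw [hnorm]
    exact norm_map_sq_le_of_transfer (L := Lₚ) htransfer hL1 b
  let T : M →L[ℂ] A := L.extendOfNorm q
  have hT (b : A) : T (q b) = L b :=
    LinearMap.extendOfNorm_eq hdense ⟨1, fun b ↦ by simpa using hbound b⟩ b
  refine ⟨hU, hbound, T, hT, fun a ↦ congrFun ?_⟩
  exact hdense.equalizer (hinner_cont _) (continuous_const.mul T.continuous)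
    (funext fun b ↦ by simp [hU, hT])
end

section
/- Let {S_{ij} : 1 ≤ i ≤ n, 1 ≤ j ≤ N} be a Cuntz family of nN isometries in a unital C*-algebra C (S_{ij}*S_{ij} = 1 and Σ_{i,j} S_{ij}S_{ij}* = 1). For μ, ν ∈ {1,…,n}^k define F_{μν} := Σ_{λ ∈ {1,…,N}^k} S_{μλ} S_{νλ}*, where S_{μλ} := S_{μ₁λ₁}⋯S_{μ_kλ_k}. Then {F_{μν}} is a family of nonzero matrix units in C: F_{μν}F_{στ} = δ_{νσ}F_{μτ}, (F_{μν})* = F_{νμ}, and Σ_{μ ∈ {1,…,n}^k} F_{μμ} = 1. -/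
/-- The word `S_{μλ} = S_{μ₁λ₁} ⋯ S_{μ_kλ_k}` associated to a doubly-indexed family. -/
def cuntzWord {C : Type*} [Monoid C] {n N : ℕ} (S : Fin n → Fin N → C) {k : ℕ}
    (μ : Fin k → Fin n) (lam : Fin k → Fin N) : C :=
  (List.ofFn fun m => S (μ m) (lam m)).prod

/-- `F_{μν} = ∑_{λ ∈ {1,…,N}^k} S_{μλ} S_{νλ}*`. -/
noncomputable def cuntzF {C : Type*} [Monoid C] [AddCommMonoid C] [StarMul C]
    {n N : ℕ} (S : Fin n → Fin N → C) {k : ℕ}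
    (μ ν : Fin k → Fin n) : C :=
  ∑ lam : Fin k → Fin N, cuntzWord S μ lam * star (cuntzWord S ν lam)

section aux

variable {C : Type*} [CStarAlgebra C] {n N : ℕ}

/-- Orthogonality of the generators of a Cuntz family. -/
lemma cuntz_pair_ortho (S : Fin n → Fin N → C)
    (hisom : ∀ i j, star (S i j) * S i j = 1)
    (hsum : ∑ i : Fin n, ∑ j : Fin N, S i j * star (S i j) = 1) :
    ∀ i j i' j', star (S i j) * S i' j' =
      if i = i' ∧ j = j' then (1 : C) else 0 := by
  letI := CStarAlgebra.spectralOrder C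
  haveI := CStarAlgebra.spectralOrderedRing C
  set P : Fin n × Fin N → C := fun x => S x.1 x.2 * star (S x.1 x.2) with hP
  have hsum' : ∑ x : Fin n × Fin N, P x = 1 := by
    rw [Fintype.sum_prod_type]; exact hsum
  have hidem : ∀ x, P x * P x = P x := by
    intro x
    simp only [hP]
    rw [mul_assoc, ← mul_assoc (star _), hisom, one_mul]
  have hstar : ∀ x, star (P x) = P x := by
    intro x; simp [hP]
  have horth : ∀ a b : Fin n × Fin N, a ≠ b → P a * P b = 0 := by
    intro a b hab
    have h1 : ∑ x : Fin n × Fin N, P b * P x * P b = P b := by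
      rw [← Finset.sum_mul, ← Finset.mul_sum, hsum', mul_one, hidem]
    have h2 := Finset.add_sum_erase Finset.univ (fun x => P b * P x * P b)
      (Finset.mem_univ b)
    rw [h1] at h2
    have h3 : P b * P b * P b = P b := by rw [hidem, hidem]
    simp only [h3] at h2
    have hkey : ∑ x ∈ Finset.univ.erase b, P b * P x * P b = 0 := by
      rwa [add_eq_left] at h2
    have hterm : ∀ x, P b * P x * P b = star (P x * P b) * (P x * P b) := by
      intro x
      rw [star_mul, hstar, hstar]
      calc P b * P x * P b = P b * (P x * P x) * P b := by rw [hidem]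
        _ = (P b * P x) * (P x * P b) := by simp only [mul_assoc]
    have hnn : ∀ x ∈ Finset.univ.erase b, (0 : C) ≤ P b * P x * P b := by
      intro x _
      rw [hterm]
      exact star_mul_self_nonneg _
    have hz : P b * P a * P b = 0 :=
      (Finset.sum_eq_zero_iff_of_nonneg hnn).mp hkey a
        (Finset.mem_erase.mpr ⟨hab, Finset.mem_univ a⟩)
    rw [hterm] at hz
    exact CStarRing.star_mul_self_eq_zero_iff _ |>.mp hz
  have hisom' : ∀ (i j) (x : C), star (S i j) * (S i j * x) = x := by
    intro i j x; rw [← mul_assoc, hisom, one_mul]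
  intro i j i' j'
  by_cases h : i = i' ∧ j = j'
  · obtain ⟨rfl, rfl⟩ := h
    rw [if_pos ⟨rfl, rfl⟩, hisom]
  · rw [if_neg h]
    have hab : ((i, j) : Fin n × Fin N) ≠ (i', j') := by
      simp only [Ne, Prod.mk.injEq]; exact h
    have h0 : P (i, j) * P (i', j') = 0 := horth _ _ hab
    have key : star (S i j) * (P (i, j) * P (i', j')) * S i' j' =
        star (S i j) * S i' j' := by
      simp only [hP, mul_assoc, hisom, mul_one, hisom']
    rw [← key, h0, mul_zero, zero_mul]

lemma fin_succ_fun_ext {k : ℕ} {α : Type*} (f g : Fin (k + 1) → α) :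
    f = g ↔ f 0 = g 0 ∧ f ∘ Fin.succ = g ∘ Fin.succ := by
  constructor
  · rintro rfl; exact ⟨rfl, rfl⟩
  · rintro ⟨h0, hs⟩
    funext i
    refine Fin.cases h0 (fun j => congrFun hs j) i

lemma cuntz_word_ortho (S : Fin n → Fin N → C)
    (hisom : ∀ i j, star (S i j) * S i j = 1)
    (hsum : ∑ i : Fin n, ∑ j : Fin N, S i j * star (S i j) = 1) :
    ∀ (k : ℕ) (ν σ : Fin k → Fin n) (lam lam' : Fin k → Fin N),
      star (cuntzWord S ν lam) * cuntzWord S σ lam' =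
        if ν = σ ∧ lam = lam' then (1 : C) else 0 := by
  have hgen := cuntz_pair_ortho S hisom hsum
  intro k
  induction k with
  | zero =>
    intro ν σ lam lam'
    rw [if_pos ⟨Subsingleton.elim _ _, Subsingleton.elim _ _⟩]
    simp [cuntzWord]
  | succ k ih =>
    intro ν σ lam lam'
    have hw : ∀ (μ0 : Fin (k+1) → Fin n) (l0 : Fin (k+1) → Fin N),
        cuntzWord S μ0 l0 =
          S (μ0 0) (l0 0) * cuntzWord S (μ0 ∘ Fin.succ) (l0 ∘ Fin.succ) := by
      intro μ0 l0
      simp [cuntzWord, List.ofFn_succ, Function.comp]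
    rw [hw ν lam, hw σ lam', star_mul, mul_assoc,
      ← mul_assoc (star (S (ν 0) (lam 0))), hgen]
    by_cases h0 : ν 0 = σ 0 ∧ lam 0 = lam' 0
    · rw [if_pos h0, one_mul, ih]
      refine if_congr ?_ rfl rfl
      rw [fin_succ_fun_ext ν σ, fin_succ_fun_ext lam lam']
      tauto
    · rw [if_neg h0, zero_mul, mul_zero, if_neg]
      rintro ⟨rfl, rfl⟩
      exact h0 ⟨rfl, rfl⟩

lemma mul4_rearrange (a b c d : C) : (a * b) * (c * d) = a * ((b * c) * d) := by
  simp only [mul_assoc]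

end aux

/-- If `{S_{ij} : 1 ≤ i ≤ n, 1 ≤ j ≤ N}` is a Cuntz family of `nN` isometries in a unital
C*-algebra `C`, then the elements `F_{μν} = ∑_λ S_{μλ} S_{νλ}*` (for multi-indices
`μ, ν ∈ {1,…,n}^k`) form a family of nonzero matrix units:
`F_{μν} F_{στ} = δ_{νσ} F_{μτ}`, `(F_{μν})* = F_{νμ}`, and `∑_μ F_{μμ} = 1`. -/
theorem stmt8 {C : Type*} [CStarAlgebra C] [Nontrivial C]
    (n N k : ℕ) (hn : 1 ≤ n) (hN : 1 ≤ N)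
    (S : Fin n → Fin N → C)
    (hisom : ∀ i j, star (S i j) * S i j = 1)
    (hsum : ∑ i : Fin n, ∑ j : Fin N, S i j * star (S i j) = 1) :
    (∀ μ ν σ τ : Fin k → Fin n,
      cuntzF S μ ν * cuntzF S σ τ = if ν = σ then cuntzF S μ τ else 0) ∧
    (∀ μ ν : Fin k → Fin n, star (cuntzF S μ ν) = cuntzF S ν μ) ∧
    (∑ μ : Fin k → Fin n, cuntzF S μ μ) = 1 ∧
    (∀ μ ν : Fin k → Fin n, cuntzF S μ ν ≠ 0) := by
  have hWo := cuntz_word_ortho S hisom hsum k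
  -- Part 1: multiplication rule
  have hmul : ∀ μ ν σ τ : Fin k → Fin n,
      cuntzF S μ ν * cuntzF S σ τ = if ν = σ then cuntzF S μ τ else 0 := by
    intro μ ν σ τ
    rw [cuntzF, cuntzF, Finset.sum_mul_sum]
    by_cases h : ν = σ
    · subst h
      rw [if_pos rfl, cuntzF]
      refine Finset.sum_congr rfl fun lam _ => ?_
      rw [Finset.sum_eq_single lam]
      · rw [mul4_rearrange, hWo, if_pos ⟨rfl, rfl⟩, one_mul]
      · intro lam' _ hne
        rw [mul4_rearrange, hWo, if_neg (fun hc => hne hc.2.symm), zero_mul, mul_zero]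
      · intro habs; exact absurd (Finset.mem_univ lam) habs
    · rw [if_neg h]
      refine Finset.sum_eq_zero fun lam _ => Finset.sum_eq_zero fun lam' _ => ?_
      rw [mul4_rearrange, hWo, if_neg (fun hc => h hc.1), zero_mul, mul_zero]
  -- Part 2: star
  have hstarF : ∀ μ ν : Fin k → Fin n, star (cuntzF S μ ν) = cuntzF S ν μ := by
    intro μ ν
    simp [cuntzF, star_sum, star_mul, star_star]
  -- Part 3: sum to one
  have hone : ∀ (m : ℕ), (∑ μ : Fin m → Fin n, ∑ lam : Fin m → Fin N,
      cuntzWord S μ lam * star (cuntzWord S μ lam)) = 1 := by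
    intro m
    induction m with
    | zero => simp [cuntzWord]
    | succ m ih =>
      have e1 : ∀ {α : Type} [Fintype α] [DecidableEq α] (f : (Fin (m+1) → α) → C),
          ∑ μ : Fin (m+1) → α, f μ =
            ∑ i : α, ∑ μ' : Fin m → α, f (Fin.cons i μ') := by
        intro α _ _ f
        rw [← Equiv.sum_comp (Fin.consEquiv fun _ => α) f, Fintype.sum_prod_type]
        rfl
      have hw : ∀ (i : Fin n) (μ' : Fin m → Fin n) (j : Fin N) (l' : Fin m → Fin N),
          cuntzWord S (Fin.cons i μ') (Fin.cons j l') = S i j * cuntzWord S μ' l' := by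
        intro i μ' j l'
        simp [cuntzWord, List.ofFn_succ]
      rw [e1]
      calc ∑ i : Fin n, ∑ μ' : Fin m → Fin n, ∑ lam : Fin (m+1) → Fin N,
            cuntzWord S (Fin.cons i μ') lam * star (cuntzWord S (Fin.cons i μ') lam)
          = ∑ i : Fin n, ∑ j : Fin N, S i j *
              (∑ μ' : Fin m → Fin n, ∑ l' : Fin m → Fin N,
                cuntzWord S μ' l' * star (cuntzWord S μ' l')) * star (S i j) := by
            refine Finset.sum_congr rfl fun i _ => ?_
            have hin : ∀ μ' : Fin m → Fin n,
                (∑ lam : Fin (m+1) → Fin N,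
                  cuntzWord S (Fin.cons i μ') lam * star (cuntzWord S (Fin.cons i μ') lam))
                = ∑ j : Fin N, ∑ l' : Fin m → Fin N,
                    (S i j * cuntzWord S μ' l') * star (S i j * cuntzWord S μ' l') := by
              intro μ'
              rw [e1]
              simp only [hw]
            rw [Finset.sum_congr rfl fun μ' _ => hin μ', Finset.sum_comm]
            simp only [Finset.mul_sum, Finset.sum_mul]
            refine Finset.sum_congr rfl fun j _ => Finset.sum_congr rfl fun μ' _ =>
              Finset.sum_congr rfl fun l' _ => ?_
            simp only [star_mul, mul_assoc]
        _ = 1 := by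
            simp only [ih, mul_one]
            exact hsum
  refine ⟨hmul, hstarF, ?_, ?_⟩
  · simp only [cuntzF]
    exact hone k
  · intro μ ν hF
    have hνν : cuntzF S ν ν = 0 := by
      have h := hmul ν μ μ ν
      rw [if_pos rfl, hF, mul_zero] at h
      exact h.symm
    set lam0 : Fin k → Fin N := fun _ => ⟨0, hN⟩ with hlam0
    have h1 : star (cuntzWord S ν lam0) * cuntzF S ν ν * cuntzWord S ν lam0 = 1 := by
      rw [cuntzF, Finset.mul_sum, Finset.sum_mul]
      have hterm : ∀ lam : Fin k → Fin N,
          star (cuntzWord S ν lam0) * (cuntzWord S ν lam * star (cuntzWord S ν lam)) *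
            cuntzWord S ν lam0 = if lam = lam0 then 1 else 0 := by
        intro lam
        have e : star (cuntzWord S ν lam0) *
            (cuntzWord S ν lam * star (cuntzWord S ν lam)) * cuntzWord S ν lam0 =
            (star (cuntzWord S ν lam0) * cuntzWord S ν lam) *
              (star (cuntzWord S ν lam) * cuntzWord S ν lam0) := by
          simp only [mul_assoc]
        rw [e, hWo, hWo]
        by_cases hl : lam = lam0
        · subst hl; simp
        · rw [if_neg (fun hc => hl hc.2.symm), zero_mul, if_neg hl]
      rw [Finset.sum_congr rfl fun lam _ => hterm lam]
      simp
    rw [hνν, mul_zero, zero_mul] at h1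
    exact zero_ne_one h1
end

section
/- Let E be a column-finite directed graph with no sinks and {t_e, p_v} a Cuntz-Krieger E-family. For paths μ, ν of equal length with s(μ) = s(ν), define e_{μ,ν} := Σ_{s(e)=r(μ), s(f)=r(ν)} (|s^{-1}(r(μ))||s^{-1}(r(ν))|)^{-1/2} t_{eμ} t_{fν}*. Then these elements satisfy the matrix-unit relations e_{μ,ν} e_{κ,λ} = δ_{ν,κ} e_{μ,λ} and (e_{μ,ν})* = e_{ν,μ}, for paths μ, ν, κ, λ of the same length with s(μ)=s(ν) and s(κ)=s(λ). -/
/-!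
Put `S_μ = ∑_{s(e) = r(μ)} t_{eμ}`, so that `e_{μ,ν}` is
`(|s⁻¹(r μ)| |s⁻¹(r ν)|)^{-1/2} S_μ S_ν*`. Peeling off first edges,
`t_{fν}* t_{gκ} = δ_{f,g} δ_{ν,κ} p_{s(ν)}`, hence `S_ν* S_κ = δ_{ν,κ} |s⁻¹(r ν)| p_{s(ν)}`,
while `S_μ p_{s(μ)} = S_μ` because each `t_{eμ}` is a partial isometry with initial projection
`p_{s(μ)}`. So `e_{μ,ν} e_{ν,λ}` is a multiple of `S_μ S_λ*`, and the factor `|s⁻¹(r ν)|`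
cancels the two copies of `|s⁻¹(r ν)|^{-1/2}`.
-/

/-- `μ : Fin k → E1` is a path (edges composing left-to-right as `μ₁μ₂⋯μ_k` with
`s(μᵢ) = r(μᵢ₊₁)`) from source vertex `v` (the source of the last edge) to range vertex
`w` (the range of the first edge); a path of length `0` is a vertex, and then `v = w`. -/
structure IsPathFromTo {E0 E1 : Type*} (r s : E1 → E0) {k : ℕ}
    (μ : Fin k → E1) (v w : E0) : Prop where
  chain : ∀ (i : ℕ) (h : i + 1 < k), s (μ ⟨i, by omega⟩) = r (μ ⟨i + 1, h⟩)
  rng : ∀ h : 0 < k, r (μ ⟨0, h⟩) = w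
  src : ∀ h : 0 < k, s (μ ⟨k - 1, by omega⟩) = v
  deg : k = 0 → w = v

/-- The partial isometry `t_μ = t_{μ₁} ⋯ t_{μ_k}` associated to a path `μ` with range
vertex `w`; for a genuine path the leading factor `p w` is redundant, and for the empty
path (a vertex) `t_μ = p w`. -/
def tPath {E0 E1 B : Type*} [Monoid B] (p : E0 → B) (t : E1 → B) {k : ℕ}
    (w : E0) (μ : Fin k → E1) : B :=
  p w * (List.ofFn fun i => t (μ i)).prod


/-- For a Cuntz–Krieger family on a column-finite graph with no sinks, the elements
`e_{μ,ν} := ∑_{s(e)=r(μ), s(f)=r(ν)} (|s⁻¹(r μ)| |s⁻¹(r ν)|)^{-1/2} t_{eμ} t_{fν}*`. -/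
noncomputable def eUnit {E0 E1 B : Type*} [Ring B] [Algebra ℂ B] [StarRing B]
    (r s : E1 → E0) (p : E0 → B) (t : E1 → B) (sfin : E0 → Finset E1) {k : ℕ}
    (wμ wν : E0) (μ ν : Fin k → E1) : B :=
  ∑ e ∈ sfin wμ, ∑ f ∈ sfin wν,
    ((Real.sqrt (((sfin wμ).card : ℝ) * ((sfin wν).card : ℝ)) : ℂ))⁻¹ •
      (tPath p t (r e) (Fin.cons e μ) * star (tPath p t (r f) (Fin.cons f ν)))

theorem mul_eq_self_of_star_mul_self_eq {B : Type*} [NonUnitalNormedRing B] [StarRing B]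
    [CStarRing B] {x q : B} (hx : star x * x = q) (hq : IsStarProjection q) : x * q = x := by
  have hxq : star x * (x * q) = q := by rw [← mul_assoc, hx, hq.isIdempotentElem.eq]
  have h : star (x * q - x) * (x * q - x) = 0 := by
    rw [star_sub, star_mul, hq.isSelfAdjoint.star_eq, sub_mul, mul_sub, mul_sub, mul_assoc q, hxq,
      mul_assoc q, hx, hq.isIdempotentElem.eq, sub_self]
  rwa [CStarRing.star_mul_self_eq_zero_iff, sub_eq_zero] at h

theorem Real.inv_sqrt_mul_inv_sqrt_mul_cancel {a n : ℝ} (b : ℝ) (ha : 0 ≤ a) (hn : 0 < n) :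
    (√(a * n))⁻¹ * (√(n * b))⁻¹ * n = (√(a * b))⁻¹ := by
  have h : √(a * n) * √(n * b) = √(a * b) * n := by
    rw [← Real.sqrt_mul (mul_nonneg ha hn.le), show a * n * (n * b) = a * b * (n * n) by ring,
      Real.sqrt_mul' _ (mul_self_nonneg n), Real.sqrt_mul_self hn.le]
  rw [← mul_inv, h, mul_inv, inv_mul_cancel_right₀ hn.ne']

section Paths

variable {E0 E1 : Type*} {r s : E1 → E0}

theorem isPathFromTo_cons_iff {k : ℕ} {e : E1} {μ : Fin k → E1} {v w : E0} :
    IsPathFromTo r s (Fin.cons e μ : Fin (k + 1) → E1) v w ↔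
      r e = w ∧ IsPathFromTo r s μ v (s e) := by
  constructor
  · intro h
    refine ⟨h.rng k.succ_pos, ⟨fun i hi => h.chain (i + 1) (by omega),
      fun hk => ?_, fun hk => ?_, fun hk => ?_⟩⟩
    · have h0 : s ((Fin.cons e μ : Fin (k + 1) → E1) 0) =
          r ((Fin.cons e μ : Fin (k + 1) → E1) (Fin.succ ⟨0, hk⟩)) := h.chain 0 (by omega)
      rw [Fin.cons_zero, Fin.cons_succ] at h0
      exact h0.symm
    · obtain ⟨j, rfl⟩ := Nat.exists_eq_add_one_of_ne_zero hk.ne'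
      exact h.src (by omega)
    · subst hk
      exact h.src Nat.one_pos
  · rintro ⟨hr, hμ⟩
    refine ⟨fun i hi => ?_, fun _ => hr, fun _ => ?_, fun hk => absurd hk k.succ_ne_zero⟩
    · cases i with
      | zero => exact (hμ.rng (by omega)).symm
      | succ i => exact hμ.chain i (by omega)
    · cases k with
      | zero => exact hμ.deg rfl
      | succ j => exact hμ.src j.succ_pos

end Paths

theorem tPath_zero {E0 E1 B : Type*} [Monoid B] (p : E0 → B) (t : E1 → B) (w : E0)
    (μ : Fin 0 → E1) : tPath p t w μ = p w := by
  simp [tPath]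

/-- The Cuntz–Krieger relations other than the summation relation
`p_v = ∑_{r e = v} t_e t_e*`. -/
structure IsEdgeIsometryFamily {E0 E1 B : Type*} [Mul B] [Star B] [Zero B] (r s : E1 → E0)
    (p : E0 → B) (t : E1 → B) : Prop where
  isStarProjection : ∀ v, IsStarProjection (p v)
  mul_eq_zero_of_ne : ∀ v w, v ≠ w → p v * p w = 0
  star_t_mul_t : ∀ e, star (t e) * t e = p (s e)
  p_range_mul_t : ∀ e, p (r e) * t e = t e
  star_t_mul_t_of_ne : ∀ e f, e ≠ f → star (t e) * t f = 0

namespace IsEdgeIsometryFamily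

variable {E0 E1 B : Type*} [NormedRing B] [StarRing B] {r s : E1 → E0} {p : E0 → B}
  {t : E1 → B}

theorem t_mul_p_source [CStarRing B] (hF : IsEdgeIsometryFamily r s p t) (e : E1) :
    t e * p (s e) = t e :=
  mul_eq_self_of_star_mul_self_eq (hF.star_t_mul_t e) (hF.isStarProjection _)

theorem p_mul_tPath (hF : IsEdgeIsometryFamily r s p t) {k : ℕ} (w : E0) (μ : Fin k → E1) :
    p w * tPath p t w μ = tPath p t w μ := by
  rw [tPath, ← mul_assoc, (hF.isStarProjection w).isIdempotentElem.eq]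

theorem tPath_cons_of_range [CStarRing B] (hF : IsEdgeIsometryFamily r s p t) {k : ℕ} {e : E1}
    (μ : Fin k → E1) :
    tPath p t (r e) (Fin.cons e μ : Fin (k + 1) → E1) = t e * tPath p t (s e) μ := by
  simp only [tPath, List.ofFn_succ, List.prod_cons, Fin.cons_zero, Fin.cons_succ]
  rw [← mul_assoc, hF.p_range_mul_t, ← mul_assoc, hF.t_mul_p_source]

theorem star_tPath_mul_tPath [CStarRing B] [DecidableEq E0] [DecidableEq E1]
    (hF : IsEdgeIsometryFamily r s p t) {k : ℕ} {ν κ : Fin k → E1} {vν wν vκ wκ : E0}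
    (hν : IsPathFromTo r s ν vν wν) (hκ : IsPathFromTo r s κ vκ wκ) :
    star (tPath p t wν ν) * tPath p t wκ κ = if ν = κ ∧ wν = wκ then p vν else 0 := by
  induction k generalizing wν wκ with
  | zero =>
    have hνκ : ν = κ := Subsingleton.elim _ _
    rw [tPath_zero, tPath_zero, (hF.isStarProjection wν).isSelfAdjoint.star_eq]
    by_cases hw : wν = wκ
    · rw [if_pos ⟨hνκ, hw⟩, ← hw, (hF.isStarProjection wν).isIdempotentElem.eq,
        hν.deg rfl]
    · rw [if_neg (fun h => hw h.2), hF.mul_eq_zero_of_ne _ _ hw]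
  | succ k ih =>
    induction ν using Fin.consCases with | cons e ν =>
    induction κ using Fin.consCases with | cons f κ =>
    obtain ⟨rfl, hν'⟩ := isPathFromTo_cons_iff.mp hν
    obtain ⟨rfl, hκ'⟩ := isPathFromTo_cons_iff.mp hκ
    rw [hF.tPath_cons_of_range, hF.tPath_cons_of_range, star_mul, mul_assoc,
      ← mul_assoc (star (t e))]
    by_cases hef : e = f
    · subst hef
      rw [hF.star_t_mul_t, hF.p_mul_tPath, ih hν' hκ']
      simp [Fin.cons_inj]
    · rw [hF.star_t_mul_t_of_ne _ _ hef, zero_mul, mul_zero, if_neg]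
      simp [Fin.cons_inj, hef]

end IsEdgeIsometryFamily

section MatrixUnits

variable {E0 E1 B : Type*} {r s : E1 → E0} {p : E0 → B} {t : E1 → B} {sfin : E0 → Finset E1}

def sumTPathCons [Semiring B] (r : E1 → E0) (p : E0 → B) (t : E1 → B)
    (sfin : E0 → Finset E1) {k : ℕ} (w : E0) (μ : Fin k → E1) : B :=
  ∑ e ∈ sfin w, tPath p t (r e) (Fin.cons e μ : Fin (k + 1) → E1)

theorem eUnit_eq_smul [Ring B] [Algebra ℂ B] [StarRing B] {k : ℕ} (wμ wν : E0)
    (μ ν : Fin k → E1) :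
    eUnit r s p t sfin wμ wν μ ν =
      ((√((sfin wμ).card * (sfin wν).card : ℝ) : ℂ))⁻¹ •
        (sumTPathCons r p t sfin wμ μ * star (sumTPathCons r p t sfin wν ν)) := by
  simp only [eUnit, sumTPathCons, star_sum, Finset.sum_mul_sum, Finset.smul_sum]

theorem star_eUnit [Ring B] [Algebra ℂ B] [StarRing B] [StarModule ℂ B] {k : ℕ} (wμ wν : E0)
    (μ ν : Fin k → E1) :
    star (eUnit r s p t sfin wμ wν μ ν) = eUnit r s p t sfin wν wμ ν μ := by
  rw [eUnit_eq_smul, eUnit_eq_smul, star_smul, star_mul, star_star, mul_comm (_ : ℝ) (_ : ℝ),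
    star_inv₀, Complex.star_def, Complex.conj_ofReal]

variable [NormedRing B] [StarRing B] [CStarRing B]

theorem IsEdgeIsometryFamily.star_sumTPathCons_mul_sumTPathCons [DecidableEq E0]
    [DecidableEq E1] (hF : IsEdgeIsometryFamily r s p t)
    (hsfin : ∀ v e, e ∈ sfin v ↔ s e = v) {k : ℕ} {ν κ : Fin k → E1} {vν vκ wν wκ : E0}
    (hν : IsPathFromTo r s ν vν wν) (hκ : IsPathFromTo r s κ vκ wκ) :
    star (sumTPathCons r p t sfin wν ν) * sumTPathCons r p t sfin wκ κ =
      if ν = κ ∧ wν = wκ then (sfin wν).card • p vν else 0 := by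
  have hterm : ∀ f ∈ sfin wν, ∀ g ∈ sfin wκ,
      star (tPath p t (r f) (Fin.cons f ν : Fin (k + 1) → E1)) *
          tPath p t (r g) (Fin.cons g κ) =
        if f = g ∧ ν = κ then p vν else 0 := by
    intro f hf g hg
    rw [hF.star_tPath_mul_tPath (isPathFromTo_cons_iff.mpr ⟨rfl, (hsfin _ _).mp hf ▸ hν⟩)
      (isPathFromTo_cons_iff.mpr ⟨rfl, (hsfin _ _).mp hg ▸ hκ⟩)]
    refine if_congr ?_ rfl rfl
    rw [Fin.cons_inj]
    exact ⟨fun h => h.1, fun h => ⟨h, by rw [h.1]⟩⟩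
  simp only [sumTPathCons, star_sum, Finset.sum_mul_sum]
  rw [Finset.sum_congr rfl fun f hf => Finset.sum_congr rfl fun g hg => hterm f hf g hg]
  split_ifs with h
  · obtain ⟨rfl, rfl⟩ := h
    simp [Finset.sum_ite_eq]
  · refine Finset.sum_eq_zero fun f hf => Finset.sum_eq_zero fun g hg => if_neg ?_
    rintro ⟨rfl, hνκ⟩
    exact h ⟨hνκ, ((hsfin _ _).mp hf).symm.trans ((hsfin _ _).mp hg)⟩

theorem IsEdgeIsometryFamily.sumTPathCons_mul_p_source (hF : IsEdgeIsometryFamily r s p t)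
    (hsfin : ∀ v e, e ∈ sfin v ↔ s e = v) {k : ℕ} {μ : Fin k → E1} {v w : E0}
    (hμ : IsPathFromTo r s μ v w) :
    sumTPathCons r p t sfin w μ * p v = sumTPathCons r p t sfin w μ := by
  classical
  refine Finset.sum_mul _ _ _ |>.trans (Finset.sum_congr rfl fun e he => ?_)
  have heμ : IsPathFromTo r s (Fin.cons e μ : Fin (k + 1) → E1) v (r e) :=
    isPathFromTo_cons_iff.mpr ⟨rfl, (hsfin _ _).mp he ▸ hμ⟩
  refine mul_eq_self_of_star_mul_self_eq ?_ (hF.isStarProjection v)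
  rw [hF.star_tPath_mul_tPath heμ heμ, if_pos ⟨rfl, rfl⟩]

theorem IsEdgeIsometryFamily.eUnit_mul_eUnit [Algebra ℂ B] [DecidableEq E0] [DecidableEq E1]
    (hF : IsEdgeIsometryFamily r s p t) (hsfin : ∀ v e, e ∈ sfin v ↔ s e = v)
    (hnosink : ∀ v, (sfin v).Nonempty) {k : ℕ} {μ ν κ lam : Fin k → E1}
    {v v' wμ wν wκ wl : E0} (hμ : IsPathFromTo r s μ v wμ) (hν : IsPathFromTo r s ν v wν)
    (hκ : IsPathFromTo r s κ v' wκ) :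
    eUnit r s p t sfin wμ wν μ ν * eUnit r s p t sfin wκ wl κ lam =
      if ν = κ ∧ wν = wκ then eUnit r s p t sfin wμ wl μ lam else 0 := by
  rw [eUnit_eq_smul, eUnit_eq_smul, smul_mul_smul_comm, mul_assoc, ← mul_assoc (star _),
    ← mul_assoc, hF.star_sumTPathCons_mul_sumTPathCons hsfin hν hκ]
  split_ifs with h
  · obtain ⟨rfl, rfl⟩ := h
    have hcard : (0 : ℝ) < (sfin wν).card := by exact_mod_cast (hnosink wν).card_pos
    rw [eUnit_eq_smul, mul_smul_comm, hF.sumTPathCons_mul_p_source hsfin hμ, smul_mul_assoc,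
      ← Nat.cast_smul_eq_nsmul ℂ, smul_smul]
    congr 1
    exact_mod_cast Real.inv_sqrt_mul_inv_sqrt_mul_cancel (sfin wl).card
      (Nat.cast_nonneg (sfin wμ).card) hcard
  · rw [mul_zero, zero_mul, smul_zero]

end MatrixUnits

theorem stmt12_general {E0 E1 B : Type*} [CStarAlgebra B]
    (r s : E1 → E0) (p : E0 → B) (t : E1 → B)
    (sfin : E0 → Finset E1)
    (hsfin : ∀ v e, e ∈ sfin v ↔ s e = v)
    (hnosink : ∀ v, (sfin v).Nonempty)
    (hproj : ∀ v, p v * p v = p v ∧ star (p v) = p v)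
    (horthp : ∀ v w, v ≠ w → p v * p w = 0)
    (hisom : ∀ e, star (t e) * t e = p (s e))
    (hrange : ∀ e, p (r e) * t e = t e)
    (horth : ∀ e f, e ≠ f → star (t e) * t f = 0)
    (k : ℕ) (vμν vkl : E0)
    (μ ν κ lam : Fin k → E1) (wμ wν wκ wl : E0)
    (hμ : IsPathFromTo r s μ vμν wμ) (hν : IsPathFromTo r s ν vμν wν)
    (hκ : IsPathFromTo r s κ vkl wκ) :
    ((ν = κ ∧ wν = wκ) →
      eUnit r s p t sfin wμ wν μ ν * eUnit r s p t sfin wκ wl κ lam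
        = eUnit r s p t sfin wμ wl μ lam) ∧
    (¬(ν = κ ∧ wν = wκ) →
      eUnit r s p t sfin wμ wν μ ν * eUnit r s p t sfin wκ wl κ lam = 0) ∧
    star (eUnit r s p t sfin wμ wν μ ν) = eUnit r s p t sfin wν wμ ν μ := by
  classical
  have hF : IsEdgeIsometryFamily r s p t :=
    ⟨fun v => ⟨(hproj v).1, (hproj v).2⟩, horthp, hisom, hrange, horth⟩
  have hmul := hF.eUnit_mul_eUnit (sfin := sfin) (lam := lam) (wl := wl) hsfin hnosink hμ hν hκ
  exact ⟨fun h => hmul.trans (if_pos h), fun h => hmul.trans (if_neg h), star_eUnit _ _ _ _⟩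

/-- Let `E` be a column-finite directed graph with no sinks and `{t_e, p_v}` a
Cuntz–Krieger `E`-family.  For paths `μ, ν, κ, λ` of a common length with
`s(μ) = s(ν)` and `s(κ) = s(λ)`, the elements `e_{μ,ν}` satisfy the matrix-unit
relations `e_{μ,ν} e_{κ,λ} = δ_{ν,κ} e_{μ,λ}` and `(e_{μ,ν})* = e_{ν,μ}`. -/
theorem stmt12 {E0 E1 B : Type*} [CStarAlgebra B]
    (r s : E1 → E0) (p : E0 → B) (t : E1 → B)
    (sfin : E0 → Finset E1)
    (hsfin : ∀ v e, e ∈ sfin v ↔ s e = v)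
    (hnosink : ∀ v, (sfin v).Nonempty)
    (hproj : ∀ v, p v * p v = p v ∧ star (p v) = p v)
    (horthp : ∀ v w, v ≠ w → p v * p w = 0)
    (hisom : ∀ e, star (t e) * t e = p (s e))
    (hrange : ∀ e, p (r e) * t e = t e)
    (horth : ∀ e f, e ≠ f → star (t e) * t f = 0)
    (k : ℕ) (vμν vkl : E0)
    (μ ν κ lam : Fin k → E1) (wμ wν wκ wl : E0)
    (hμ : IsPathFromTo r s μ vμν wμ) (hν : IsPathFromTo r s ν vμν wν)
    (hκ : IsPathFromTo r s κ vkl wκ) (hl : IsPathFromTo r s lam vkl wl) :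
    ((ν = κ ∧ wν = wκ) →
      eUnit r s p t sfin wμ wν μ ν * eUnit r s p t sfin wκ wl κ lam
        = eUnit r s p t sfin wμ wl μ lam) ∧
    (¬(ν = κ ∧ wν = wκ) →
      eUnit r s p t sfin wμ wν μ ν * eUnit r s p t sfin wκ wl κ lam = 0) ∧
    star (eUnit r s p t sfin wμ wν μ ν) = eUnit r s p t sfin wν wμ ν μ :=
  stmt12_general r s p t sfin hsfin hnosink hproj horthp hisom hrange horth k vμν vkl μ ν κ lam wμ
    wν wκ wl hμ hν hκ
end

section
/- Let E be a directed graph with a pair of paths μ, ν of equal positive length such that s(μ) = s(ν) but r(μ) ≠ r(ν), and let {s_e, p_v} be the universal Cuntz-Krieger E-family. Then the map β₁(a) := Σ_{e ∈ E¹} s_e a s_e* (when E¹ is finite) is not multiplicative on the core: β₁(s_μ s_ν*) = 0, while β₁((s_μ s_ν*)(s_ν s_μ*)) = β₁(s_μ s_μ*) ≠ 0. -/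
/-!
Since `t e = t e * p (s e)` and distinct vertex projections are orthogonal,
`t e * t_μ = 0` unless `s e = r μ`; as `r μ ≠ r ν`, every term
`t e t_μ t_ν* t e* = (t e t_μ)(t e t_ν)*` of `β₁(t_μ t_ν*)` vanishes.
On the other hand `t_ν* t_ν = p (s ν) = p (s μ)` is absorbed by `t_μ`, so
`β₁((t_μ t_ν*)(t_μ t_ν*)*) = ∑ₑ (t e t_μ)(t e t_μ)*` is a sum of positive elements.
If it vanished, then `t e t_μ = 0` for an edge `e` with `s e = r μ` (there are no sinks),
whence `t_μ = t e* t e t_μ = 0` and `p (s μ) = t_μ* t_μ = 0`.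
-/

theorem CStarRing.mul_star_mul_self_of_isIdempotentElem {B : Type*} [NonUnitalNormedRing B]
    [StarRing B] [CStarRing B] {x : B} (h : IsIdempotentElem (star x * x)) :
    x * (star x * x) = x := by
  have : star (x * (star x * x) - x) * (x * (star x * x) - x) = 0 := by
    simp only [star_sub, star_mul, star_star, sub_mul, mul_sub, mul_assoc]
    simp only [← mul_assoc (star x) x, h.eq]
    simp only [sub_self]
  exact sub_eq_zero.mp ((CStarRing.star_mul_self_eq_zero_iff _).mp this)

theorem CStarAlgebra.eq_zero_of_sum_mul_star_self_eq_zero {B ι : Type*} [CStarAlgebra B]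
    {S : Finset ι} {x : ι → B} (h : ∑ i ∈ S, x i * star (x i) = 0) {i : ι} (hi : i ∈ S) :
    x i = 0 := by
  let _ := CStarAlgebra.spectralOrder B
  have := CStarAlgebra.spectralOrderedRing B
  have := (Finset.sum_eq_zero_iff_of_nonneg fun i _ => mul_star_self_nonneg (x i)).mp h i hi
  exact (CStarRing.mul_star_self_eq_zero_iff _).mp this

namespace IsPathFromTo

variable {E0 E1 : Type*} {r s : E1 → E0} {k : ℕ} {μ : Fin (k + 1) → E1} {v w : E0}

theorem source_last (hμ : IsPathFromTo r s μ v w) : s (μ (Fin.last k)) = v :=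
  hμ.src k.succ_pos

theorem init (hμ : IsPathFromTo r s μ v w) :
    IsPathFromTo r s (Fin.init μ) (r (μ (Fin.last k))) w where
  chain i h := hμ.chain i (by omega)
  rng h := hμ.rng (by omega)
  src h := by
    obtain ⟨m, rfl⟩ : ∃ m, k = m + 1 := ⟨k - 1, by omega⟩
    exact hμ.chain m (by omega)
  deg h := by
    subst h
    exact (hμ.rng Nat.one_pos).symm

end IsPathFromTo

section CuntzKriegerFamily

variable {E0 E1 B : Type*} {r s : E1 → E0} {p : E0 → B} {t : E1 → B}

theorem tPath_succ [Monoid B] {k : ℕ} (w : E0) (μ : Fin (k + 1) → E1) :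
    tPath p t w μ = tPath p t w (Fin.init μ) * t (μ (Fin.last k)) := by
  simp only [tPath, List.ofFn_succ', List.prod_concat, mul_assoc]
  rfl

theorem star_tPath_mul_tPath [Monoid B] [StarMul B] (hproj : ∀ v, IsStarProjection (p v))
    (hisom : ∀ e, star (t e) * t e = p (s e)) (hrange : ∀ e, p (r e) * t e = t e) :
    ∀ {k : ℕ} {μ : Fin k → E1} {v w : E0}, IsPathFromTo r s μ v w →
      star (tPath p t w μ) * tPath p t w μ = p v
  | 0, μ, v, w, hμ => by
    obtain rfl := hμ.deg rfl
    simp [tPath, (hproj w).isSelfAdjoint.star_eq, (hproj w).isIdempotentElem.eq]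
  | k + 1, μ, v, w, hμ => by
    rw [tPath_succ, star_mul, mul_assoc, ← mul_assoc (star (tPath p t w (Fin.init μ))),
      star_tPath_mul_tPath hproj hisom hrange hμ.init, hrange, hisom, hμ.source_last]

theorem tPath_eq_zero_of_mul_eq_zero [MonoidWithZero B] [Star B]
    (hproj : ∀ v, IsStarProjection (p v)) (hisom : ∀ e, star (t e) * t e = p (s e))
    {k : ℕ} {μ : Fin k → E1} {e : E1} {w : E0} (he : s e = w) (h : t e * tPath p t w μ = 0) :
    tPath p t w μ = 0 := by
  calc tPath p t w μ = p w * tPath p t w μ := by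
        rw [tPath, ← mul_assoc, (hproj w).isIdempotentElem.eq]
    _ = star (t e) * (t e * tPath p t w μ) := by rw [← mul_assoc, hisom, he]
    _ = 0 := by rw [h, mul_zero]

variable [NormedRing B] [StarRing B] [CStarRing B]

theorem mul_proj_eq_zero_of_source_ne (hproj : ∀ v, IsStarProjection (p v))
    (horthp : ∀ v w, v ≠ w → p v * p w = 0) (hisom : ∀ e, star (t e) * t e = p (s e))
    {e : E1} {w : E0} (he : s e ≠ w) : t e * p w = 0 := by
  have hsrc : t e * p (s e) = t e := by
    simpa [hisom] using CStarRing.mul_star_mul_self_of_isIdempotentElem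
      (x := t e) (by rw [hisom]; exact (hproj _).isIdempotentElem)
  rw [← hsrc, mul_assoc, horthp _ _ he, mul_zero]

theorem mul_tPath_eq_zero_of_source_ne (hproj : ∀ v, IsStarProjection (p v))
    (horthp : ∀ v w, v ≠ w → p v * p w = 0) (hisom : ∀ e, star (t e) * t e = p (s e))
    {k : ℕ} (μ : Fin k → E1) {e : E1} {w : E0} (he : s e ≠ w) :
    t e * tPath p t w μ = 0 := by
  rw [tPath, ← mul_assoc, mul_proj_eq_zero_of_source_ne hproj horthp hisom he, zero_mul]

theorem tPath_mul_proj_source (hproj : ∀ v, IsStarProjection (p v))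
    (hisom : ∀ e, star (t e) * t e = p (s e)) (hrange : ∀ e, p (r e) * t e = t e)
    {k : ℕ} {μ : Fin k → E1} {v w : E0} (hμ : IsPathFromTo r s μ v w) :
    tPath p t w μ * p v = tPath p t w μ := by
  have hstar := star_tPath_mul_tPath hproj hisom hrange hμ
  have h := CStarRing.mul_star_mul_self_of_isIdempotentElem (x := tPath p t w μ)
    (hstar ▸ (hproj v).isIdempotentElem)
  rwa [hstar] at h

end CuntzKriegerFamily

theorem stmt18_general {E0 E1 B : Type*} [CStarAlgebra B] [Fintype E1]
    (r s : E1 → E0) (p : E0 → B) (t : E1 → B)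
    (hproj : ∀ v, p v * p v = p v ∧ star (p v) = p v)
    (horthp : ∀ v w, v ≠ w → p v * p w = 0)
    (hisom : ∀ e, star (t e) * t e = p (s e))
    (hrange : ∀ e, p (r e) * t e = t e)
    (hpnz : ∀ v, p v ≠ 0)
    (hnosink : ∀ v : E0, ∃ e : E1, s e = v)
    (k : ℕ) (μ ν : Fin (k + 1) → E1) (v wμ wν : E0)
    (hμ : IsPathFromTo r s μ v wμ) (hν : IsPathFromTo r s ν v wν)
    (hw : wμ ≠ wν) :
    (∑ e : E1, t e * (tPath p t wμ μ * star (tPath p t wν ν)) * star (t e)) = 0 ∧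
    (∑ e : E1, t e *
        ((tPath p t wμ μ * star (tPath p t wν ν)) *
          star (tPath p t wμ μ * star (tPath p t wν ν))) * star (t e)) ≠ 0 := by
  have hproj' : ∀ v, IsStarProjection (p v) := fun v => ⟨(hproj v).1, (hproj v).2⟩
  have hkill : ∀ {e : E1} {w : E0} (ρ : Fin (k + 1) → E1), s e ≠ w →
      t e * tPath p t w ρ = 0 :=
    fun ρ he => mul_tPath_eq_zero_of_source_ne hproj' horthp hisom ρ he
  set Tμ := tPath p t wμ μ
  set Tν := tPath p t wν ν
  refine ⟨Finset.sum_eq_zero fun e _ => ?_, ?_⟩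
  · by_cases he : s e = wμ
    · rw [show t e * (Tμ * star Tν) * star (t e) = t e * Tμ * star (t e * Tν) by
        simp only [star_mul, mul_assoc], hkill ν (he ▸ hw), star_zero, mul_zero]
    · rw [← mul_assoc, hkill μ he, zero_mul, zero_mul]
  · have hinner : Tμ * star Tν * star (Tμ * star Tν) = Tμ * star Tμ := by
      rw [star_mul, star_star, mul_assoc, ← mul_assoc (star Tν),
        star_tPath_mul_tPath hproj' hisom hrange hν, ← mul_assoc,
        tPath_mul_proj_source hproj' hisom hrange hμ]
    obtain ⟨e₀, he₀⟩ := hnosink wμ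
    intro hzero
    have hsum : ∑ e, t e * Tμ * star (t e * Tμ) = 0 := by
      rw [hinner] at hzero
      simpa only [star_mul, mul_assoc] using hzero
    have h₀ := CStarAlgebra.eq_zero_of_sum_mul_star_self_eq_zero hsum (Finset.mem_univ e₀)
    apply hpnz v
    rw [← star_tPath_mul_tPath hproj' hisom hrange hμ,
      tPath_eq_zero_of_mul_eq_zero hproj' hisom he₀ h₀, mul_zero]

/-- Let `E` be a finite directed graph with no sinks containing paths `μ, ν` of equal
positive length with common source `v` but different ranges `r(μ) ≠ r(ν)`, and let
`{t_e, p_v}` be a Cuntz–Krieger `E`-family with all vertex projections nonzero (as for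
the universal family in `C*(E)`).  Then the "canonical endomorphism" candidate
`β₁(a) = ∑_{e ∈ E¹} t_e a t_e*` is not multiplicative on the core:
`β₁(t_μ t_ν*) = 0`, while `β₁((t_μ t_ν*)(t_μ t_ν*)*) = β₁(t_μ t_μ*) ≠ 0`. -/
theorem stmt18 {E0 E1 B : Type*} [CStarAlgebra B] [Fintype E1]
    (r s : E1 → E0) (p : E0 → B) (t : E1 → B)
    (hproj : ∀ v, p v * p v = p v ∧ star (p v) = p v)
    (horthp : ∀ v w, v ≠ w → p v * p w = 0)
    (hisom : ∀ e, star (t e) * t e = p (s e))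
    (hrange : ∀ e, p (r e) * t e = t e)
    (horth : ∀ e f, e ≠ f → star (t e) * t f = 0)
    (hCK : ∀ v : E0, ({e : E1 | r e = v}).Nonempty →
      ∀ rfin : Finset E1, (∀ e, e ∈ rfin ↔ r e = v) →
        p v = ∑ e ∈ rfin, t e * star (t e))
    (hpnz : ∀ v, p v ≠ 0)
    (hnosink : ∀ v : E0, ∃ e : E1, s e = v)
    (k : ℕ) (μ ν : Fin (k + 1) → E1) (v wμ wν : E0)
    (hμ : IsPathFromTo r s μ v wμ) (hν : IsPathFromTo r s ν v wν)
    (hw : wμ ≠ wν) :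
    (∑ e : E1, t e * (tPath p t wμ μ * star (tPath p t wν ν)) * star (t e)) = 0 ∧
    (∑ e : E1, t e *
        ((tPath p t wμ μ * star (tPath p t wν ν)) *
          star (tPath p t wμ μ * star (tPath p t wν ν))) * star (t e)) ≠ 0 :=
  stmt18_general r s p t hproj horthp hisom hrange hpnz hnosink k μ ν v wμ wν hμ hν hw
end

section
/- Let (A, α, L) be an Exel system with A unital and L a transfer operator satisfying L(1) = 1, and let M_L be the associated Hilbert A-module with q : A → M_L the canonical map. Then L is almost faithful on an ideal I (meaning: a ∈ I and L(b*a*ab) = 0 for all b ∈ A imply a = 0) if and only if the left-action homomorphism φ : A → L(M_L) is injective on I, because L(b*a*ab) = ⟨φ(a)q(b), φ(a)q(b)⟩ for all a, b ∈ A. -/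
/-- Let `(A, α, L)` be an Exel system with `A` unital and `L(1) = 1`, `M_L` the associated
Hilbert module (abstracted as a normed space `M` with `A`-valued inner product, dense
canonical map `q` with `⟪q a, q b⟫ = L(a* b)` and `‖m‖² = ‖⟪m, m⟫‖`), and `φ` the left
action `φ(a)(q b) = q(a b)` by adjointable operators.  Then for any (two-sided) ideal
`I` of `A`, `L` is almost faithful on `I` (i.e. `a ∈ I` and `L(b* a* a b) = 0` for all
`b` imply `a = 0`) if and only if `φ` is injective on `I`, because
`L(b* a* a b) = ⟪φ(a)(q b), φ(a)(q b)⟫`. -/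
theorem stmt19 {A : Type*} [CStarAlgebra A] {M : Type*}
    [NormedAddCommGroup M] [NormedSpace ℂ M]
    (inner : M → M → A) (q : A →ₗ[ℂ] M)
    (α : A →⋆ₐ[ℂ] A) (L : A →ₗ[ℂ] A)
    (hLpos : ∀ a : A, (∃ x, a = star x * x) → ∃ y, L a = star y * y)
    (htransfer : ∀ a b : A, L (α a * b) = a * L b)
    (hL1 : L 1 = 1)
    (hinner : ∀ a b : A, inner (q a) (q b) = L (star a * b))
    (hnorm : ∀ m : M, ‖m‖ ^ 2 = ‖inner m m‖)
    (hdense : DenseRange q)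
    (φ : A → (M →L[ℂ] M))
    (hφ : ∀ a b : A, φ a (q b) = q (a * b))
    (I : TwoSidedIdeal A) :
    (∀ a b : A, L (star b * (star a * (a * b))) = inner (φ a (q b)) (φ a (q b))) ∧
    ((∀ a ∈ I, (∀ b : A, L (star b * (star a * (a * b))) = 0) → a = 0) ↔
      (∀ a ∈ I, φ a = 0 → a = 0)) := by
  have key : ∀ a b : A, L (star b * (star a * (a * b))) = inner (φ a (q b)) (φ a (q b)) := by
    intro a b
    rw [hφ, hinner]
    congr 1
    simp [star_mul, mul_assoc]
  refine ⟨key, ?_, ?_⟩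
  · -- almost faithful → injective
    intro h a ha hφa
    refine h a ha fun b => ?_
    have h0 : inner (0 : M) 0 = 0 := by
      have := hnorm (0 : M)
      simp at this
      exact norm_eq_zero.mp this.symm
    rw [key a b, hφa]
    simpa using h0
  · -- injective → almost faithful
    intro h a ha hL
    refine h a ha ?_
    have hz : ∀ b : A, φ a (q b) = 0 := by
      intro b
      have : ‖φ a (q b)‖ ^ 2 = 0 := by
        rw [hnorm, ← key a b, hL b, norm_zero]
      exact norm_eq_zero.mp (by nlinarith [norm_nonneg (φ a (q b))])
    have : (φ a : M → M) = (0 : M →L[ℂ] M) := by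
      refine Continuous.ext_on hdense (φ a).continuous continuous_const ?_
      rintro m ⟨b, rfl⟩
      simpa using hz b
    ext m
    exact congrFun this m
end
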